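/- arXiv:2006.16799 — 5 statements merged into one kernel-verified Lean document; each statement's English description precedes it below -/
import Mathlib

section
/- The 4-dimensional algebra over F_2 with basis 1, s, x, w and relations s² = 1, sx = wx = w² = w, xs = 1 + s + w, ws = 1 + s + x, sw = xw = x² = x, equipped with Δ(s) = s⊗s, Δ(x) = s⊗x + x⊗1, Δ(w) = 1⊗w + w⊗s, ε(s) = 1, ε(x) = ε(w) = 0, S(s) = s, S(x) = w, S(w) = 1 + s + x, is a Hopf algebra (called d_{sl_2}); it is noncommutative and noncocommutative. -/
open scoped BigOperators

namespace Digital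

abbrev F2 := ZMod 2

/-- Kronecker delta on basis indices. -/
def kd {n : ℕ} (i j : Fin n) : F2 := if i = j then 1 else 0

/-- Bialgebra axioms in structure-constant (tensor) form, for an algebra with
basis `x^0 = 1, x^1, …` over `F₂`: `x^μ x^ν = Σ_ρ V μ ν ρ x^ρ`,
`Δ x^μ = Σ C μ ν ρ x^ν ⊗ x^ρ`, `ε x^μ = E μ`. -/
def IsBialgebraData {n : ℕ} [NeZero n] (V C : Fin n → Fin n → Fin n → F2)
    (E : Fin n → F2) : Prop :=
  -- unitality of the product
  (∀ μ ν, V 0 μ ν = kd μ ν) ∧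
  (∀ μ ν, V μ 0 ν = kd μ ν) ∧
  -- associativity
  (∀ ρ ν μ γ, ∑ l, V ρ ν l * V l μ γ = ∑ l, V ν μ l * V ρ l γ) ∧
  -- Δ 1 = 1 ⊗ 1 and ε 1 = 1
  (∀ ν ρ, C 0 ν ρ = kd ν 0 * kd ρ 0) ∧
  (E 0 = 1) ∧
  -- coassociativity
  (∀ μ α β γ, ∑ ν, C μ ν γ * C ν α β = ∑ ρ, C μ α ρ * C ρ β γ) ∧
  -- counit axioms
  (∀ μ ρ, ∑ ν, C μ ν ρ * E ν = kd μ ρ) ∧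
  (∀ μ ν, ∑ ρ, C μ ν ρ * E ρ = kd μ ν) ∧
  -- Δ is an algebra homomorphism
  (∀ μ ν l γ, ∑ ρ, V μ ν ρ * C ρ l γ =
      ∑ α, ∑ β, ∑ ρ, ∑ d, C μ α β * C ν ρ d * V α ρ l * V β d γ) ∧
  -- ε is an algebra homomorphism
  (∀ μ ν, ∑ ρ, V μ ν ρ * E ρ = E μ * E ν)

/-- Hopf algebra axioms in structure-constant form: bialgebra plus an antipode
matrix `S` with `S x^μ = Σ_ν S μ ν x^ν` satisfying
`m ∘ (S ⊗ id) ∘ Δ = η ∘ ε = m ∘ (id ⊗ S) ∘ Δ`. -/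
def IsHopfData {n : ℕ} [NeZero n] (V C : Fin n → Fin n → Fin n → F2)
    (E : Fin n → F2) (S : Fin n → Fin n → F2) : Prop :=
  IsBialgebraData V C E ∧
  (∀ μ β, ∑ ν, ∑ ρ, ∑ α, C μ ν ρ * S ν α * V α ρ β = E μ * kd β 0) ∧
  (∀ μ β, ∑ ν, ∑ ρ, ∑ l, C μ ν ρ * S ρ l * V ν l β = E μ * kd β 0)

/-- A right integral `∫ x^μ = I μ`, i.e. `(∫ ⊗ id) ∘ Δ = 1 ∫`. -/
def IsRightIntegral {n : ℕ} [NeZero n] (C : Fin n → Fin n → Fin n → F2)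
    (I : Fin n → F2) : Prop :=
  ∀ μ ρ, ∑ ν, C μ ν ρ * I ν = I μ * kd ρ 0

/-- Product of two elements `R, R'` of `H ⊗ H` given in coefficient form. -/
def mulTT {n : ℕ} (V : Fin n → Fin n → Fin n → F2) (R R' : Fin n → Fin n → F2)
    (σ τ : Fin n) : F2 :=
  ∑ μ, ∑ ν, ∑ α, ∑ β, R μ ν * R' α β * V μ α σ * V ν β τ

/-- The element `1 ⊗ 1` of `H ⊗ H` in coefficient form. -/
def unitTT {n : ℕ} [NeZero n] (σ τ : Fin n) : F2 := kd σ 0 * kd τ 0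

/-- Drinfeld's quasitriangularity axioms for `ℛ = Σ R μ ν x^μ ⊗ x^ν`:
`(Δ ⊗ id)ℛ = ℛ₁₃ℛ₂₃`, `(id ⊗ Δ)ℛ = ℛ₁₃ℛ₁₂`, `ℛ Δh = (Δ^{op} h) ℛ`. -/
def QTax {n : ℕ} (V C : Fin n → Fin n → Fin n → F2)
    (R : Fin n → Fin n → F2) : Prop :=
  (∀ α β ρ, ∑ μ, R μ ρ * C μ α β = ∑ μ, ∑ ν, R α μ * R β ν * V μ ν ρ) ∧
  (∀ μ α β, ∑ ν, R μ ν * C ν α β = ∑ ρ, ∑ ν, R ρ α * R ν β * V ν ρ μ) ∧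
  (∀ ρ σ τ, ∑ μ, ∑ ν, ∑ α, ∑ β, R μ ν * C ρ α β * V μ α σ * V ν β τ =
      ∑ μ, ∑ ν, ∑ α, ∑ β, R μ ν * C ρ β α * V α μ σ * V β ν τ)

/-- A quasitriangular structure: an invertible element of `H ⊗ H` satisfying the
Drinfeld axioms together with the counit conditions `(ε⊗id)ℛ = 1 = (id⊗ε)ℛ`. -/
def IsQT {n : ℕ} [NeZero n] (V C : Fin n → Fin n → Fin n → F2) (E : Fin n → F2)
    (R : Fin n → Fin n → F2) : Prop :=
  QTax V C R ∧
  (∀ ν, ∑ μ, E μ * R μ ν = kd ν 0) ∧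
  (∀ ν, ∑ μ, E μ * R ν μ = kd ν 0) ∧
  (∃ R', (∀ σ τ, mulTT V R R' σ τ = unitTT σ τ) ∧
         (∀ σ τ, mulTT V R' R σ τ = unitTT σ τ))


/-- Product of `d_{sl₂}` on the basis `1, s, x, w`:
`s² = 1`, `sx = wx = w² = w`, `xs = 1+s+w`, `ws = 1+s+x`,
`sw = xw = x² = x`. -/
def Vdsl : Fin 4 → Fin 4 → Fin 4 → F2 :=
  ![![![1,0,0,0],![0,1,0,0],![0,0,1,0],![0,0,0,1]],
    ![![0,1,0,0],![1,0,0,0],![0,0,0,1],![0,0,1,0]],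
    ![![0,0,1,0],![1,1,0,1],![0,0,1,0],![0,0,1,0]],
    ![![0,0,0,1],![1,1,1,0],![0,0,0,1],![0,0,0,1]]]

/-- Coproduct: `Δs = s⊗s`, `Δx = s⊗x + x⊗1`, `Δw = 1⊗w + w⊗s`. -/
def Cdsl : Fin 4 → Fin 4 → Fin 4 → F2 :=
  ![![![1,0,0,0],![0,0,0,0],![0,0,0,0],![0,0,0,0]],
    ![![0,0,0,0],![0,1,0,0],![0,0,0,0],![0,0,0,0]],
    ![![0,0,0,0],![0,0,1,0],![1,0,0,0],![0,0,0,0]],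
    ![![0,0,0,1],![0,0,0,0],![0,0,0,0],![0,1,0,0]]]

/-- Counit: `ε1 = εs = 1`, `εx = εw = 0`. -/
def Edsl : Fin 4 → F2 := ![1,1,0,0]

/-- Antipode: `Ss = s`, `Sx = w`, `Sw = 1 + s + x`. -/
def Sdsl : Fin 4 → Fin 4 → F2 :=
  ![![1,0,0,0],![0,1,0,0],![0,0,0,1],![1,1,1,0]]

theorem Vdsl_one_mul : ∀ μ ν, Vdsl 0 μ ν = kd μ ν := by decide

theorem Vdsl_mul_one : ∀ μ ν, Vdsl μ 0 ν = kd μ ν := by decide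

theorem Vdsl_assoc :
    ∀ ρ ν μ γ, ∑ l, Vdsl ρ ν l * Vdsl l μ γ = ∑ l, Vdsl ν μ l * Vdsl ρ l γ := by
  decide

theorem Cdsl_one : ∀ ν ρ, Cdsl 0 ν ρ = kd ν 0 * kd ρ 0 := by decide

theorem Cdsl_coassoc :
    ∀ μ α β γ, ∑ ν, Cdsl μ ν γ * Cdsl ν α β = ∑ ρ, Cdsl μ α ρ * Cdsl ρ β γ := by
  decide

theorem Cdsl_counit_left : ∀ μ ρ, ∑ ν, Cdsl μ ν ρ * Edsl ν = kd μ ρ := by decide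

theorem Cdsl_counit_right : ∀ μ ν, ∑ ρ, Cdsl μ ν ρ * Edsl ρ = kd μ ν := by decide

theorem Cdsl_mul :
    ∀ μ ν l γ, ∑ ρ, Vdsl μ ν ρ * Cdsl ρ l γ = mulTT Vdsl (Cdsl μ) (Cdsl ν) l γ := by
  unfold mulTT
  decide +kernel

theorem Edsl_mul : ∀ μ ν, ∑ ρ, Vdsl μ ν ρ * Edsl ρ = Edsl μ * Edsl ν := by decide

theorem isBialgebraData_dsl : IsBialgebraData Vdsl Cdsl Edsl :=
  ⟨Vdsl_one_mul, Vdsl_mul_one, Vdsl_assoc, Cdsl_one, rfl, Cdsl_coassoc, Cdsl_counit_left,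
    Cdsl_counit_right, Cdsl_mul, Edsl_mul⟩

theorem Sdsl_antipode_left :
    ∀ μ β, ∑ ν, ∑ ρ, ∑ α, Cdsl μ ν ρ * Sdsl ν α * Vdsl α ρ β = Edsl μ * kd β 0 := by
  decide

theorem Sdsl_antipode_right :
    ∀ μ β, ∑ ν, ∑ ρ, ∑ l, Cdsl μ ν ρ * Sdsl ρ l * Vdsl ν l β = Edsl μ * kd β 0 := by
  decide

theorem isHopfData_dsl : IsHopfData Vdsl Cdsl Edsl Sdsl :=
  ⟨isBialgebraData_dsl, Sdsl_antipode_left, Sdsl_antipode_right⟩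

/-- The 4-dimensional algebra over `F₂` with basis `1, s, x, w` and the stated
relations, coproduct, counit and antipode is a Hopf algebra (`d_{sl₂}`); it is
noncommutative and noncocommutative. -/
theorem dsl2_isHopf_noncomm_noncocomm :
    IsHopfData Vdsl Cdsl Edsl Sdsl ∧
    (∃ μ ν, Vdsl μ ν ≠ Vdsl ν μ) ∧
    (∃ μ ν ρ, Cdsl μ ν ρ ≠ Cdsl μ ρ ν) :=
  -- basis indices `0, 1, 2, 3` stand for `1, s, x, w`:
  -- `xs = 1 + s + w ≠ w = sx`, and `Δx` contains `s ⊗ x` but not `x ⊗ s`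
  ⟨isHopfData_dsl, ⟨2, 1, by decide⟩, ⟨2, 1, 2, by decide⟩⟩

end Digital
end

section
/- The antipode S of the Hopf algebra d_{sl_2} over F_2 satisfies S⁴ = id but S² ≠ id. -/
/-!
`S²` is a transvection: `S² = 1 + N` with `N ≠ 0` and `N² = 0` (it fixes `1`, `s` and sends
`x ↦ 1 + s + x`, `w ↦ 1 + s + w`). In characteristic 2, `(1 + N)² = 1 + 2N + N² = 1`, so
`S⁴ = 1` while `S² ≠ 1`.
-/

/-- The matrix of the antipode of `d_{sl₂}` on the basis `1, s, x, w`: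
`S1 = 1`, `Ss = s`, `Sx = w`, `Sw = 1 + s + x`. -/
def Sdsl : Matrix (Fin 4) (Fin 4) (ZMod 2) :=
  !![1,0,0,0; 0,1,0,0; 0,0,0,1; 1,1,1,0]

theorem sq_one_add_eq_one_of_sq_eq_zero {R : Type*} [Ring R] [CharP R 2] {N : R}
    (hN : N ^ 2 = 0) : (1 + N) ^ 2 = 1 := by
  rw [(Commute.one_left N).add_sq, one_pow, mul_one, CharTwo.two_eq_zero, zero_mul, hN,
    add_zero, add_zero]

def Ndsl : Matrix (Fin 4) (Fin 4) (ZMod 2) :=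
  !![0,0,0,0; 0,0,0,0; 1,1,0,0; 1,1,0,0]

theorem Ndsl_sq : Ndsl ^ 2 = 0 := by decide

theorem Ndsl_ne_zero : Ndsl ≠ 0 := by decide

theorem Sdsl_sq : Sdsl ^ 2 = 1 + Ndsl := by decide

/-- The antipode of the Hopf algebra `d_{sl₂}` over `F₂` satisfies `S⁴ = id`
but `S² ≠ id`. -/
theorem dsl2_antipode_order : Sdsl ^ 4 = 1 ∧ Sdsl ^ 2 ≠ 1 := by
  constructor
  · rw [show Sdsl ^ 4 = (Sdsl ^ 2) ^ 2 by rw [← pow_mul], Sdsl_sq,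
      sq_one_add_eq_one_of_sq_eq_zero Ndsl_sq]
  · rw [Sdsl_sq, Ne, add_eq_left]
    exact Ndsl_ne_zero
end

section
/- The bilinear form ⟨·,·⟩ on d_{sl_2} determined on the basis 1, s, x, w by ⟨1,1⟩ = ⟨1,s⟩ = ⟨s,1⟩ = ⟨s,s⟩ = ⟨s,x⟩ = ⟨s,w⟩ = ⟨x,s⟩ = ⟨w,s⟩ = ⟨w,w⟩ = 1 and all other basis pairings zero, is a Hopf algebra self-duality pairing: ⟨ab, c⟩ = ⟨a⊗b, Δc⟩, ⟨a, bc⟩ = ⟨Δa, b⊗c⟩, ⟨1,a⟩ = ε(a) = ⟨a,1⟩, and ⟨Sa, b⟩ = ⟨a, Sb⟩ for all a, b, c. -/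
open scoped BigOperators

namespace Digital

/-- The self-duality pairing on the basis `1, s, x, w`. -/
def Pdsl : Fin 4 → Fin 4 → F2 :=
  ![![1,1,0,0],![1,1,1,1],![0,1,0,0],![0,1,0,1]]

theorem pairing_mul_right_of_mul_left {R ι : Type*} [CommSemiring R] [Fintype ι]
    {V C : ι → ι → ι → R} {P : ι → ι → R} (hP : ∀ i j, P i j = P j i)
    (h : ∀ μ ν τ, ∑ ρ, V μ ν ρ * P ρ τ = ∑ α, ∑ β, C τ α β * P μ α * P ν β)
    (μ ν τ : ι) :
    ∑ ρ, V ν τ ρ * P μ ρ = ∑ α, ∑ β, C μ α β * P α ν * P β τ := by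
  calc ∑ ρ, V ν τ ρ * P μ ρ = ∑ ρ, V ν τ ρ * P ρ μ := by simp only [hP μ]
    _ = ∑ α, ∑ β, C μ α β * P ν α * P τ β := h ν τ μ
    _ = ∑ α, ∑ β, C μ α β * P α ν * P β τ := by simp only [hP ν, hP τ]

theorem Pdsl_symm : ∀ i j, Pdsl i j = Pdsl j i := by decide

theorem Pdsl_mul_left : ∀ μ ν τ, ∑ ρ, Vdsl μ ν ρ * Pdsl ρ τ =
    ∑ α, ∑ β, Cdsl τ α β * Pdsl μ α * Pdsl ν β := by
  decide

theorem Pdsl_zero_left : ∀ μ, Pdsl 0 μ = Edsl μ := by decide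

theorem Sdsl_mul_Pdsl_symm : ∀ μ ν, ∑ α, Sdsl μ α * Pdsl α ν = ∑ α, Sdsl ν α * Pdsl μ α := by
  decide

/-- The stated bilinear form on `d_{sl₂}` is a Hopf algebra self-duality
pairing: `⟨ab,c⟩ = ⟨a⊗b, Δc⟩`, `⟨a,bc⟩ = ⟨Δa, b⊗c⟩`, `⟨1,a⟩ = εa = ⟨a,1⟩`,
and `⟨Sa,b⟩ = ⟨a,Sb⟩`. -/
theorem dsl2_selfduality_pairing :
    (∀ μ ν τ, ∑ ρ, Vdsl μ ν ρ * Pdsl ρ τ =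
        ∑ α, ∑ β, Cdsl τ α β * Pdsl μ α * Pdsl ν β) ∧
    (∀ μ ν τ, ∑ ρ, Vdsl ν τ ρ * Pdsl μ ρ =
        ∑ α, ∑ β, Cdsl μ α β * Pdsl α ν * Pdsl β τ) ∧
    (∀ μ, Pdsl 0 μ = Edsl μ) ∧ (∀ μ, Pdsl μ 0 = Edsl μ) ∧
    (∀ μ ν, ∑ α, Sdsl μ α * Pdsl α ν = ∑ α, Sdsl ν α * Pdsl μ α) :=
  ⟨Pdsl_mul_left, pairing_mul_right_of_mul_left Pdsl_symm Pdsl_mul_left, Pdsl_zero_left,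
    fun μ => (Pdsl_symm μ 0).trans (Pdsl_zero_left μ), Sdsl_mul_Pdsl_symm⟩

end Digital
end

section
/- The algebra H = F_2[x]/(x^4) over F_2, equipped with Δ(x) = x⊗1 + 1⊗x + x²⊗x², ε(x) = 0, S(x) = x, is a Hopf algebra (Δ is a well-defined coassociative algebra map, ε a counit, and S an antipode), distinct from the anyonic line (which has x primitive) although built on the same algebra. -/
open scoped BigOperators

namespace Digital

/-- Product of `F₂[x]/(x⁴)` on the basis `1, x, x², x³`. -/
def Van : Fin 4 → Fin 4 → Fin 4 → F2 :=
  ![![![1,0,0,0],![0,1,0,0],![0,0,1,0],![0,0,0,1]],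
    ![![0,1,0,0],![0,0,1,0],![0,0,0,1],![0,0,0,0]],
    ![![0,0,1,0],![0,0,0,1],![0,0,0,0],![0,0,0,0]],
    ![![0,0,0,1],![0,0,0,0],![0,0,0,0],![0,0,0,0]]]

/-- The nonstandard coproduct: `Δx = x⊗1 + 1⊗x + x²⊗x²`, hence
`Δx² = x²⊗1 + 1⊗x²` and `Δx³ = x³⊗1 + x⊗x² + x²⊗x + 1⊗x³`. -/
def Cnl : Fin 4 → Fin 4 → Fin 4 → F2 :=
  ![![![1,0,0,0],![0,0,0,0],![0,0,0,0],![0,0,0,0]],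
    ![![0,1,0,0],![1,0,0,0],![0,0,1,0],![0,0,0,0]],
    ![![0,0,1,0],![0,0,0,0],![1,0,0,0],![0,0,0,0]],
    ![![0,0,0,1],![0,0,1,0],![0,1,0,0],![1,0,0,0]]]

def Ean : Fin 4 → F2 := ![1,0,0,0]

/-- Antipode `S = id`. -/
def San : Fin 4 → Fin 4 → F2 := fun μ ν => kd μ ν

/-- The primitive (anyonic line) coproduct on `F₂[x]/(x⁴)`. -/
def Cany : Fin 4 → Fin 4 → Fin 4 → F2 := fun μ ν ρ =>
  if ν.val + ρ.val = μ.val then (Nat.choose μ.val ν.val : F2) else 0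

/-!
A bialgebra map `φ` from the nonlinear line to the anyonic line satisfies
`Δ (φ x) = φ x ⊗ φ 1 + φ 1 ⊗ φ x + φ x² ⊗ φ x²`. No coproduct in the anyonic line has an
`x² ⊗ x²` component and the mixed terms contribute to it twice, so the `x²`-coefficient of
`φ x² = (φ x)²` squares to zero. In characteristic 2 that coefficient is the square of the
`x`-coefficient of `φ x`, which therefore vanishes; then no `φ (x^k) = (φ x)^k` has a linear
term, so `φ` misses `x` and is not invertible.
-/

end Digital

theorem Matrix.not_isUnit_of_col_eq_zero {ι R : Type*} [Fintype ι] [DecidableEq ι] [CommRing R]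
    [Nontrivial R] {A : Matrix ι ι R} (j : ι) (h : ∀ i, A i j = 0) : ¬IsUnit A := by
  rw [Matrix.isUnit_iff_isUnit_det, Matrix.det_eq_zero_of_column_eq_zero j h]
  exact not_isUnit_zero

namespace Digital

theorem isHopfData_Van_Cnl_Ean_San : IsHopfData Van Cnl Ean San := by
  unfold IsHopfData IsBialgebraData
  simp only [Fin.sum_univ_four]
  decide +kernel

section

variable {n : ℕ}

/-- `x^μ ↦ Σ_τ φ μ τ x^τ` is multiplicative for the product `V`. -/
def IsMultiplicative (V : Fin n → Fin n → Fin n → F2) (φ : Fin n → Fin n → F2) : Prop :=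
  ∀ μ ν τ, ∑ ρ, V μ ν ρ * φ ρ τ = ∑ α, ∑ β, φ μ α * φ ν β * V α β τ

/-- `Δ' ∘ φ = (φ ⊗ φ) ∘ Δ` for the coproducts `Δ ↔ C` on the source and `Δ' ↔ C'` on the
target of `x^μ ↦ Σ_τ φ μ τ x^τ`. -/
def IsComultiplicative (C C' : Fin n → Fin n → Fin n → F2) (φ : Fin n → Fin n → F2) : Prop :=
  ∀ μ α β, ∑ ρ, φ μ ρ * C' ρ α β = ∑ ν, ∑ ρ, C μ ν ρ * φ ν α * φ ρ β

end

theorem col_one_eq_zero_of_isMultiplicative_of_isComultiplicative {φ : Fin 4 → Fin 4 → F2}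
    (hmul : IsMultiplicative Van φ) (hcomul : IsComultiplicative Cnl Cany φ) (i : Fin 4) :
    φ i 1 = 0 := by
  have coeff_x2_x2 : 0 = φ 0 2 * φ 1 2 + φ 1 2 * φ 0 2 + φ 2 2 * φ 2 2 := by
    simpa [Cany, Cnl, Fin.sum_univ_four] using hcomul 1 2 2
  have coeff_sq_x2 : φ 2 2 = φ 1 0 * φ 1 2 + φ 1 1 * φ 1 1 + φ 1 2 * φ 1 0 := by
    simpa [Van, Fin.sum_univ_four] using hmul 1 1 2
  have coeff_sq_x : φ 2 1 = φ 1 0 * φ 1 1 + φ 1 1 * φ 1 0 := by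
    simpa [Van, Fin.sum_univ_four] using hmul 1 1 1
  have coeff_cube_x : φ 3 1 = φ 1 0 * φ 2 1 + φ 1 1 * φ 2 0 := by
    simpa [Van, Fin.sum_univ_four] using hmul 1 2 1
  have coeff_one_x : φ 0 1 = φ 0 0 * φ 0 1 + φ 0 1 * φ 0 0 := by
    simpa [Van, Fin.sum_univ_four] using hmul 0 0 1
  have h22 : φ 2 2 = 0 := by grind
  have h11 : φ 1 1 = 0 := by grind
  fin_cases i <;> grind

/-- `F₂[x]/(x⁴)` with `Δx = x⊗1 + 1⊗x + x²⊗x²`, `εx = 0`, `Sx = x` is a Hopf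
algebra over `F₂`, and it is distinct from the anyonic line (the same algebra
with `x` primitive): there is no bialgebra isomorphism between the two. -/
theorem nonlinear_anyonic_isHopf_distinct :
    IsHopfData Van Cnl Ean San ∧
    ¬∃ φ : Fin 4 → Fin 4 → F2, IsUnit (Matrix.of φ) ∧
      (∀ μ ν τ, ∑ ρ, Van μ ν ρ * φ ρ τ = ∑ α, ∑ β, φ μ α * φ ν β * Van α β τ) ∧
      (∀ μ α β, ∑ ρ, φ μ ρ * Cany ρ α β = ∑ ν, ∑ ρ, Cnl μ ν ρ * φ ν α * φ ρ β) := by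
  refine ⟨isHopfData_Van_Cnl_Ean_San, ?_⟩
  rintro ⟨φ, hunit, hmul, hcomul⟩
  exact Matrix.not_isUnit_of_col_eq_zero 1
    (col_one_eq_zero_of_isMultiplicative_of_isComultiplicative hmul hcomul) hunit

end Digital
end

section
/- On the Hopf algebra H = F_2[x]/(x^4) with Δ(x) = x⊗1 + 1⊗x + x²⊗x², the elements ℛ_{α,β} = 1⊗1 + α·x²⊗x² + β·(x⊗x² + x²⊗x + x³⊗x³), for α, β ∈ {0,1}, are quasitriangular structures, and each satisfies ℛ₂₁ℛ = 1⊗1 (triangular). -/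
/-! `H` is commutative and cocommutative, so `ℛ Δh = Δ^{op}h ℛ` holds for every `ℛ`. Each
`ℛ_{α,β}` is symmetric, so `(id ⊗ Δ)ℛ = ℛ₁₃ℛ₁₂` is the flip of `(Δ ⊗ id)ℛ = ℛ₁₃ℛ₂₃`, and
triangularity reads `ℛ² = 1 ⊗ 1`, which also makes `ℛ` its own inverse. Writing
`ℛ = 1 ⊗ 1 + A`, we get `ℛ² = 1 ⊗ 1` because in characteristic 2 squaring is additive on the
commutative algebra `H ⊗ H` and every simple tensor of `A` squares to zero (`x⁴ = 0`). What
remains, `(Δ ⊗ id)ℛ = ℛ₁₃ℛ₂₃` and the counit conditions, are finite checks. -/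

open scoped BigOperators

namespace Digital

/-- `ℛ_{α,β} = 1⊗1 + α·x²⊗x² + β·(x⊗x² + x²⊗x + x³⊗x³)`. -/
def Ran (α β : F2) : Fin 4 → Fin 4 → F2 :=
  ![![1,0,0,0],![0,0,β,0],![0,β,α,0],![0,0,0,β]]


section Structural

variable {n : ℕ} {V C : Fin n → Fin n → Fin n → F2} {R : Fin n → Fin n → F2}

theorem mul_coprod_eq_coprodOp_mul_of_comm_of_cocomm
    (hV : ∀ μ ν ρ, V μ ν ρ = V ν μ ρ) (hC : ∀ μ ν ρ, C μ ν ρ = C μ ρ ν) (ρ σ τ : Fin n) :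
    ∑ μ, ∑ ν, ∑ α, ∑ β, R μ ν * C ρ α β * V μ α σ * V ν β τ =
      ∑ μ, ∑ ν, ∑ α, ∑ β, R μ ν * C ρ β α * V α μ σ * V β ν τ := by
  simp only [hC ρ _ _, hV _ _ σ, hV _ _ τ]

theorem coprod_right_of_coprod_left_of_symm (hV : ∀ μ ν ρ, V μ ν ρ = V ν μ ρ)
    (hR : ∀ μ ν, R μ ν = R ν μ)
    (hleft : ∀ α β ρ, ∑ μ, R μ ρ * C μ α β = ∑ μ, ∑ ν, R α μ * R β ν * V μ ν ρ)
    (μ α β : Fin n) :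
    ∑ ν, R μ ν * C ν α β = ∑ ρ, ∑ ν, R ρ α * R ν β * V ν ρ μ := by
  simp only [hR μ, hleft, hR _ α, hR _ β, hV _ _ μ]

theorem QTax.of_symm (hV : ∀ μ ν ρ, V μ ν ρ = V ν μ ρ) (hC : ∀ μ ν ρ, C μ ν ρ = C μ ρ ν)
    (hR : ∀ μ ν, R μ ν = R ν μ)
    (hleft : ∀ α β ρ, ∑ μ, R μ ρ * C μ α β = ∑ μ, ∑ ν, R α μ * R β ν * V μ ν ρ) :
    QTax V C R :=
  ⟨hleft, coprod_right_of_coprod_left_of_symm hV hR hleft,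
    mul_coprod_eq_coprodOp_mul_of_comm_of_cocomm hV hC⟩

theorem IsQT.of_symm [NeZero n] {E : Fin n → F2} (hV : ∀ μ ν ρ, V μ ν ρ = V ν μ ρ)
    (hC : ∀ μ ν ρ, C μ ν ρ = C μ ρ ν) (hR : ∀ μ ν, R μ ν = R ν μ)
    (hleft : ∀ α β ρ, ∑ μ, R μ ρ * C μ α β = ∑ μ, ∑ ν, R α μ * R β ν * V μ ν ρ)
    (hcounit : ∀ ν, ∑ μ, E μ * R μ ν = kd ν 0) (hsq : ∀ σ τ, mulTT V R R σ τ = unitTT σ τ) :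
    IsQT V C E R :=
  ⟨QTax.of_symm hV hC hR hleft, hcounit, by simpa only [hR _] using hcounit, R, hsq, hsq⟩

end Structural

theorem van_comm : ∀ μ ν ρ, Van μ ν ρ = Van ν μ ρ := by decide

theorem cnl_cocomm : ∀ μ ν ρ, Cnl μ ν ρ = Cnl μ ρ ν := by decide

theorem ran_symm : ∀ α β : F2, ∀ μ ν, Ran α β μ ν = Ran α β ν μ := by decide

theorem sum_ean_mul_ran : ∀ α β : F2, ∀ ν, ∑ μ, Ean μ * Ran α β μ ν = kd ν 0 := by decide

theorem ran_coprod_left : ∀ α β : F2, ∀ a b ρ,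
    ∑ μ, Ran α β μ ρ * Cnl μ a b = ∑ μ, ∑ ν, Ran α β a μ * Ran α β b ν * Van μ ν ρ := by
  decide

theorem mulTT_ran_self : ∀ α β : F2, ∀ σ τ, mulTT Van (Ran α β) (Ran α β) σ τ = unitTT σ τ := by
  decide

/-- On the Hopf algebra `F₂[x]/(x⁴)` with `Δx = x⊗1 + 1⊗x + x²⊗x²`, every
`ℛ_{α,β}` (`α, β ∈ F₂`) is a quasitriangular structure and is triangular:
`ℛ₂₁ℛ = 1⊗1`. -/
theorem nonlinear_anyonic_quasitriangular :
    ∀ α β : F2, IsQT Van Cnl Ean (Ran α β) ∧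
      (∀ σ τ, mulTT Van (fun μ ν => Ran α β ν μ) (Ran α β) σ τ = unitTT σ τ) := by
  intro α β
  have hsymm : (fun μ ν => Ran α β ν μ) = Ran α β := funext₂ fun μ ν => (ran_symm α β μ ν).symm
  refine ⟨IsQT.of_symm van_comm cnl_cocomm (ran_symm α β) (ran_coprod_left α β)
    (sum_ean_mul_ran α β) (mulTT_ran_self α β), ?_⟩
  rw [hsymm]
  exact mulTT_ran_self α β

end Digital
end
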